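/- arXiv:2102.01598 — 13 statements merged into one kernel-verified Lean document; each statement's English description precedes it below -/
import Mathlib

section
/- Let H be a monoid and ≼ an artinian preorder on (the underlying set of) H. Then every ≼-non-unit of H factors as a non-empty finite product of ≼-irreducibles. -/
theorem stmt_1 {H : Type*} [Monoid H] (r : H → H → Prop)
    (hrefl : ∀ x, r x x) (htrans : ∀ x y z, r x y → r y z → r x z)
    (hart : ¬ ∃ f : ℕ → H, ∀ k, r (f (k + 1)) (f k) ∧ ¬ r (f k) (f (k + 1)))
    (a : H) (ha : ¬ (r a 1 ∧ r 1 a)) :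
    ∃ l : List H, l ≠ [] ∧ l.prod = a ∧
      ∀ b ∈ l, (¬ (r b 1 ∧ r 1 b)) ∧
        ∀ x y : H, ¬ (r x 1 ∧ r 1 x) → ¬ (r y 1 ∧ r 1 y) →
          (r x b ∧ ¬ r b x) → (r y b ∧ ¬ r b y) → b ≠ x * y := by
  classical
  set s : H → H → Prop := fun x y => r x y ∧ ¬ r y x with hs
  have hsirr : ∀ x, ¬ s x x := fun x h => h.2 h.1
  have hstrans : ∀ x y z, s x y → s y z → s x z := by
    rintro x y z ⟨h1, h2⟩ ⟨h3, h4⟩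
    exact ⟨htrans _ _ _ h1 h3, fun h => h4 (htrans _ _ _ h h1)⟩
  haveI : IsStrictOrder H s :=
    { irrefl := hsirr, trans := fun a b c => hstrans a b c }
  have hwf : WellFounded s := by
    rw [RelEmbedding.wellFounded_iff_isEmpty]
    constructor
    rintro ⟨f, hf⟩
    exact hart ⟨f, fun k => hf.2 (by omega : k < k + 1)⟩
  refine hwf.induction (C := fun a => ¬ (r a 1 ∧ r 1 a) →
    ∃ l : List H, l ≠ [] ∧ l.prod = a ∧
      ∀ b ∈ l, (¬ (r b 1 ∧ r 1 b)) ∧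
        ∀ x y : H, ¬ (r x 1 ∧ r 1 x) → ¬ (r y 1 ∧ r 1 y) →
          (r x b ∧ ¬ r b x) → (r y b ∧ ¬ r b y) → b ≠ x * y) a ?_ ha
  clear ha a
  intro a IH ha
  by_cases hirr : ∀ x y : H, ¬ (r x 1 ∧ r 1 x) → ¬ (r y 1 ∧ r 1 y) →
      (r x a ∧ ¬ r a x) → (r y a ∧ ¬ r a y) → a ≠ x * y
  · refine ⟨[a], by simp, by simp, ?_⟩
    intro b hb
    rw [List.mem_singleton] at hb
    subst hb
    exact ⟨ha, hirr⟩
  · push_neg at hirr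
    obtain ⟨x, y, hx, hy, hxa, hya, heq⟩ := hirr
    obtain ⟨l1, hl1ne, hl1p, hl1⟩ := IH x hxa (by tauto)
    obtain ⟨l2, hl2ne, hl2p, hl2⟩ := IH y hya (by tauto)
    refine ⟨l1 ++ l2, by simp [hl1ne], by simp [hl1p, hl2p, heq], ?_⟩
    intro b hb
    rcases List.mem_append.1 hb with h | h
    · exact hl1 b h
    · exact hl2 b h
end

section
/- Let (H, ≼) be a premonoid such that every element has finite ≼-height, and suppose that for each x ∈ H that is neither a ≼-unit nor a ≼-quark, there exist ≼-non-units y, z ∈ H with y ≼ x, z ≼ x, x = yz, and ht(y) + ht(z) ≤ ht(x). Then every ≼-irreducible of H is a ≼-quark. -/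
/-! A factorization `x = y * z` with `ht y + ht z ≤ ht x` into non-units below `x` cannot have
a factor `≼`-equivalent to `x`: that factor would have height at least `ht x`, while the other
factor has height at least `1`, and all heights are finite. So for an irreducible `a` that is not
a quark, both factors of such a factorization lie strictly below `a`, contradicting
irreducibility. -/

section

variable {H : Type*} [Monoid H]

/-- `u` is a `r`-non-unit: not `r`-equivalent to the identity. -/
def PreNonUnit [Monoid H] (r : H → H → Prop) (u : H) : Prop := ¬ (r u 1 ∧ r 1 u)

/-- Strict part of the preorder `r`. -/
def PreLt (r : H → H → Prop) (x y : H) : Prop := r x y ∧ ¬ r y x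

/-- The `r`-height of `x`: the sup of all `n ≥ 1` such that there is a chain of
`r`-non-units `x = x_1 ≻ x_2 ≻ ⋯ ≻ x_n`. -/
noncomputable def PreHeight [Monoid H] (r : H → H → Prop) (x : H) : ℕ∞ :=
  sSup {n : ℕ∞ | ∃ m : ℕ, n = m ∧ 1 ≤ m ∧ ∃ f : ℕ → H, f 0 = x ∧
    (∀ i < m, PreNonUnit r (f i)) ∧ ∀ i, i + 1 < m → PreLt r (f (i + 1)) (f i)}

/-- `a` is an `r`-quark. -/
def PreQuark [Monoid H] (r : H → H → Prop) (a : H) : Prop :=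
  PreNonUnit r a ∧ ¬ ∃ b, PreNonUnit r b ∧ PreLt r b a

/-- `a` is an `r`-irreducible. -/
def PreIrred [Monoid H] (r : H → H → Prop) (a : H) : Prop :=
  PreNonUnit r a ∧ ∀ x y : H, PreNonUnit r x → PreNonUnit r y →
    PreLt r x a → PreLt r y a → a ≠ x * y

section

variable (r : H → H → Prop)

lemma one_le_preHeight {z : H} (hz : PreNonUnit r z) : 1 ≤ PreHeight r z :=
  le_sSup ⟨1, by norm_num, le_rfl, fun _ => z, rfl, fun _ _ => hz, fun _ hi => by omega⟩

/-- Replacing the top of a descending chain from `a` by `y` with `a ≼ y` gives one from `y`. -/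
lemma preHeight_le_of_le (htrans : ∀ x y z, r x y → r y z → r x z)
    {a y : H} (hy : PreNonUnit r y) (hay : r a y) :
    PreHeight r a ≤ PreHeight r y := by
  refine sSup_le_sSup ?_
  rintro n ⟨m, rfl, hm, f, hf0, hnu, hlt⟩
  refine ⟨m, rfl, hm, Function.update f 0 y, by simp, ?_, ?_⟩
  · intro i hi
    rcases i with _ | i
    · simpa using hy
    · simpa using hnu (i + 1) hi
  · intro i hi
    rcases i with _ | i
    · obtain ⟨hle, hnge⟩ := hf0 ▸ hlt 0 hi
      simpa using ⟨htrans _ _ _ hle hay, fun hge => hnge (htrans _ _ _ hay hge)⟩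
    · simpa using hlt (i + 1) hi

lemma preHeight_lt_add_of_le (htrans : ∀ x y z, r x y → r y z → r x z)
    {a u v : H} (hu : PreNonUnit r u) (hv : PreNonUnit r v) (hau : r a u)
    (hfin : PreHeight r u ≠ ⊤) :
    PreHeight r a < PreHeight r u + PreHeight r v :=
  calc PreHeight r a ≤ PreHeight r u := preHeight_le_of_le r htrans hu hau
    _ < PreHeight r u + 1 := ENat.lt_add_one_iff hfin |>.2 le_rfl
    _ ≤ PreHeight r u + PreHeight r v := by gcongr; exact one_le_preHeight r hv

end

theorem stmt_2_general (r : H → H → Prop)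
    (htrans : ∀ x y z, r x y → r y z → r x z)
    (hsa : ∀ x : H, PreHeight r x ≠ ⊤)
    (hdec : ∀ x : H, PreNonUnit r x → ¬ PreQuark r x →
      ∃ y z : H, PreNonUnit r y ∧ PreNonUnit r z ∧ r y x ∧ r z x ∧ x = y * z ∧
        PreHeight r y + PreHeight r z ≤ PreHeight r x) :
    ∀ a : H, PreIrred r a → PreQuark r a := by
  intro a ha
  by_contra hq
  obtain ⟨y, z, hy, hz, hya, hza, rfl, hht⟩ := hdec _ ha.1 hq
  have hylt : PreLt r y (y * z) := ⟨hya, fun hay =>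
    (preHeight_lt_add_of_le r htrans hy hz hay (hsa y)).not_ge hht⟩
  have hzlt : PreLt r z (y * z) := ⟨hza, fun haz =>
    (preHeight_lt_add_of_le r htrans hz hy haz (hsa z)).not_ge (add_comm (PreHeight r y) _ ▸ hht)⟩
  exact ha.2 y z hy hz hylt hzlt rfl

theorem stmt_2 (r : H → H → Prop)
    (hrefl : ∀ x, r x x) (htrans : ∀ x y z, r x y → r y z → r x z)
    (hsa : ∀ x : H, PreHeight r x ≠ ⊤)
    (hdec : ∀ x : H, PreNonUnit r x → ¬ PreQuark r x →
      ∃ y z : H, PreNonUnit r y ∧ PreNonUnit r z ∧ r y x ∧ r z x ∧ x = y * z ∧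
        PreHeight r y + PreHeight r z ≤ PreHeight r x) :
    ∀ a : H, PreIrred r a → PreQuark r a :=
  stmt_2_general r htrans hsa hdec

end
end

section
/- Let (H, ≼) be a strongly artinian premonoid such that for each x ∈ H that is neither a ≼-unit nor a ≼-quark, there exist ≼-non-units y, z ∈ H with y ≼ x, z ≼ x, x = yz, and ht(y) + ht(z) ≤ ht(x). Then every ≼-non-unit x of H factors as a non-empty product of at most ht(x) ≼-quarks. -/
section

variable {H : Type*} [Monoid H]

lemma one_le_PreHeight {H : Type*} [Monoid H] (r : H → H → Prop) (x : H)
    (hx : PreNonUnit r x) : 1 ≤ PreHeight r x := by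
  apply le_sSup
  refine ⟨1, by simp, le_refl 1, fun _ => x, rfl, fun i _ => hx, fun i h => absurd h (by omega)⟩

theorem stmt_3 (r : H → H → Prop)
    (hrefl : ∀ x, r x x) (htrans : ∀ x y z, r x y → r y z → r x z)
    (hsa : ∀ x : H, PreHeight r x ≠ ⊤)
    (hdec : ∀ x : H, PreNonUnit r x → ¬ PreQuark r x →
      ∃ y z : H, PreNonUnit r y ∧ PreNonUnit r z ∧ r y x ∧ r z x ∧ x = y * z ∧
        PreHeight r y + PreHeight r z ≤ PreHeight r x) :
    ∀ x : H, PreNonUnit r x →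
      ∃ l : List H, l ≠ [] ∧ (∀ q ∈ l, PreQuark r q) ∧ l.prod = x ∧
        (l.length : ℕ∞) ≤ PreHeight r x := by

  intro x hx
  obtain ⟨n, hn⟩ : ∃ n : ℕ, PreHeight r x = n := by
    lift PreHeight r x to ℕ using hsa x with n
    exact ⟨n, rfl⟩
  induction n using Nat.strong_induction_on generalizing x with
  | _ n ih =>
    by_cases hq : PreQuark r x
    · refine ⟨[x], by simp, by simpa using hq, by simp, ?_⟩
      simpa using one_le_PreHeight r x hx
    · obtain ⟨y, z, hy, hz, _, _, hmul, hsum⟩ := hdec x hx hq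
      have hy1 := one_le_PreHeight r y hy
      have hz1 := one_le_PreHeight r z hz
      obtain ⟨a, ha⟩ : ∃ a : ℕ, PreHeight r y = a := by
        lift PreHeight r y to ℕ using hsa y with a; exact ⟨a, rfl⟩
      obtain ⟨b, hb⟩ : ∃ b : ℕ, PreHeight r z = b := by
        lift PreHeight r z to ℕ using hsa z with b; exact ⟨b, rfl⟩
      rw [ha, hb, hn] at hsum
      rw [ha] at hy1
      rw [hb] at hz1
      have hab : a + b ≤ n := by exact_mod_cast hsum
      have ha1 : 1 ≤ a := by exact_mod_cast hy1
      have hb1 : 1 ≤ b := by exact_mod_cast hz1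
      obtain ⟨l1, hl1ne, hl1q, hl1p, hl1len⟩ := ih a (by omega) y hy ha
      obtain ⟨l2, hl2ne, hl2q, hl2p, hl2len⟩ := ih b (by omega) z hz hb
      refine ⟨l1 ++ l2, by simp [hl1ne], ?_, by simp [hl1p, hl2p, hmul], ?_⟩
      · intro q hqmem
        rcases List.mem_append.mp hqmem with h | h
        · exact hl1q q h
        · exact hl2q q h
      · rw [ha] at hl1len
        rw [hb] at hl2len
        have h1 : (l1.length : ℕ) ≤ a := by exact_mod_cast hl1len
        have h2 : (l2.length : ℕ) ≤ b := by exact_mod_cast hl2len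
        rw [hn]
        simp only [List.length_append]
        exact_mod_cast le_trans (by exact_mod_cast Nat.add_le_add h1 h2) hab


end
end

section
/- If H is a Dedekind-finite monoid and the divisibility preorder ∣_H (defined by x ∣_H y iff y ∈ HxH) is artinian, then every non-unit of H factors as a non-empty finite product of ∣_H-irreducibles. -/
section

variable {H : Type*} [Monoid H]

/-- Two-sided divisibility: `x ∣_H y` iff `y ∈ HxH`. -/
def DvdH [Monoid H] (x y : H) : Prop := ∃ u v : H, y = u * x * v

/-- `u` is a `∣_H`-unit. -/
def DvdHUnit [Monoid H] (u : H) : Prop := DvdH u 1 ∧ DvdH 1 u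

/-- `a` is a `∣_H`-irreducible. -/
def DvdHIrred [Monoid H] (a : H) : Prop :=
  ¬ DvdHUnit a ∧ ∀ x y : H, ¬ DvdHUnit x → ¬ DvdHUnit y →
    (DvdH x a ∧ ¬ DvdH a x) → (DvdH y a ∧ ¬ DvdH a y) → a ≠ x * y

lemma dvdh_trans {x y z : H} (h1 : DvdH x y) (h2 : DvdH y z) : DvdH x z := by
  obtain ⟨u, v, rfl⟩ := h1
  obtain ⟨s, t, rfl⟩ := h2
  exact ⟨s * u, v * t, by simp [mul_assoc]⟩

lemma dvdh_refl (x : H) : DvdH x x := ⟨1, 1, by simp⟩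

lemma dvdhunit_iff (hdf : ∀ x y : H, x * y = 1 → y * x = 1) (u : H) :
    DvdHUnit u ↔ IsUnit u := by
  constructor
  · rintro ⟨⟨s, t, h⟩, -⟩
    have h1 : s * (u * t) = 1 := by rw [← mul_assoc]; exact h.symm
    have h2 : u * (t * s) = 1 := by
      have := hdf _ _ h1
      rwa [mul_assoc] at this
    exact ⟨⟨u, t * s, h2, hdf _ _ h2⟩, rfl⟩
  · rintro ⟨u, rfl⟩
    refine ⟨⟨(u⁻¹ : Hˣ), 1, by simp⟩, ⟨u, 1, by simp⟩⟩

/-- strict divisibility -/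
def DvdHLt (x y : H) : Prop := DvdH x y ∧ ¬ DvdH y x

lemma dvdhlt_trans {x y z : H} (h1 : DvdHLt x y) (h2 : DvdHLt y z) : DvdHLt x z := by
  refine ⟨dvdh_trans h1.1 h2.1, fun h => h2.2 (dvdh_trans h h1.1)⟩

instance : IsTrans H DvdHLt := ⟨fun _ _ _ => dvdhlt_trans⟩
instance : IsIrrefl H DvdHLt := ⟨fun x h => h.2 (dvdh_refl x)⟩
instance : IsStrictOrder H DvdHLt := ⟨⟩

theorem stmt_5
    (hdf : ∀ x y : H, x * y = 1 → y * x = 1)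
    (hart : ¬ ∃ f : ℕ → H, ∀ k,
      DvdH (f (k + 1)) (f k) ∧ ¬ DvdH (f k) (f (k + 1)))
    (a : H) (ha : ¬ IsUnit a) :
    ∃ l : List H, l ≠ [] ∧ (∀ b ∈ l, DvdHIrred b) ∧ l.prod = a := by
  have wf : WellFounded (DvdHLt (H := H)) := by
    rw [RelEmbedding.wellFounded_iff_isEmpty]
    constructor
    intro e
    exact hart ⟨fun k => e k, fun k => e.map_rel_iff.2 (Nat.lt_succ_self k)⟩
  induction a using WellFounded.induction wf with
  | _ a IH =>
    by_cases hirr : DvdHIrred a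
    · exact ⟨[a], by simp, by simpa using hirr, by simp⟩
    · have hna : ¬ DvdHUnit a := fun h => ha ((dvdhunit_iff hdf a).1 h)
      simp only [DvdHIrred, not_and, not_forall] at hirr
      obtain ⟨x, y, hx, hy, hxa, hya, hxy⟩ := hirr hna
      rw [not_ne_iff] at hxy
      have hxu : ¬ IsUnit x := fun h => hx ((dvdhunit_iff hdf x).2 h)
      have hyu : ¬ IsUnit y := fun h => hy ((dvdhunit_iff hdf y).2 h)
      obtain ⟨lx, hlx0, hlxi, hlxp⟩ := IH x hxa hxu
      obtain ⟨ly, hly0, hlyi, hlyp⟩ := IH y hya hyu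
      refine ⟨lx ++ ly, by simp [hlx0], ?_, by simp [hlxp, hlyp, hxy]⟩
      intro b hb
      rcases List.mem_append.1 hb with h | h
      · exact hlxi b h
      · exact hlyi b h

end
end

section
/- Let H be a unit-cancellative monoid, and let ⊢_H be the left-divisibility preorder on H, where x ⊢_H y iff y ∈ xH. An element a ∈ H is a quark for ⊢_H (that is, a is a ⊢_H-non-unit and there is no ⊢_H-non-unit b with b ≺ a) if and only if a is an atom of H. -/
section

variable {H : Type*} [Monoid H]

/-- Left divisibility: `x ⊢_H y` iff `y ∈ xH`. -/
def LDvd [Monoid H] (x y : H) : Prop := ∃ v : H, y = x * v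

/-- `u` is a `⊢_H`-unit. -/
def LDvdUnit [Monoid H] (u : H) : Prop := LDvd u 1 ∧ LDvd 1 u

private lemma dedekind {H : Type*} [Monoid H]
    (huc : ∀ x y : H, ¬ IsUnit y → x * y ≠ x ∧ y * x ≠ x)
    {u v : H} (h : u * v = 1) : IsUnit u := by
  have hvu : IsUnit (v * u) := by
    by_contra hn
    exact (huc u (v * u) hn).1 (by rw [← mul_assoc, h, one_mul])
  have hid : (v * u) * (v * u) = v * u := by
    rw [mul_assoc v u (v * u), ← mul_assoc u v u, h, one_mul]
  obtain ⟨w, hw⟩ := hvu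
  have hw1 : w = 1 := by
    have h2 : w * w = 1 * w := by
      apply Units.ext; push_cast; rw [hw, hid, one_mul]
    exact mul_right_cancel h2
  have hvu1 : v * u = 1 := by rw [← hw, hw1, Units.val_one]
  exact ⟨⟨u, v, h, hvu1⟩, rfl⟩

private lemma ldvdUnit_iff {H : Type*} [Monoid H]
    (huc : ∀ x y : H, ¬ IsUnit y → x * y ≠ x ∧ y * x ≠ x)
    (u : H) : LDvdUnit u ↔ IsUnit u := by
  constructor
  · rintro ⟨⟨v, hv⟩, -⟩
    exact dedekind huc hv.symm
  · intro hu
    exact ⟨⟨↑hu.unit⁻¹, by simp⟩, ⟨u, (one_mul u).symm⟩⟩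

theorem stmt_8
    (huc : ∀ x y : H, ¬ IsUnit y → x * y ≠ x ∧ y * x ≠ x) (a : H) :
    (¬ LDvdUnit a ∧ ¬ ∃ b : H, ¬ LDvdUnit b ∧ LDvd b a ∧ ¬ LDvd a b) ↔
      (¬ IsUnit a ∧ ∀ x y : H, ¬ IsUnit x → ¬ IsUnit y → a ≠ x * y) := by
  constructor
  · rintro ⟨hna, hq⟩
    refine ⟨fun h => hna ((ldvdUnit_iff huc a).mpr h), ?_⟩
    rintro x y hx hy rfl
    apply hq
    refine ⟨x, fun h => hx ((ldvdUnit_iff huc x).mp h), ⟨y, rfl⟩, ?_⟩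
    rintro ⟨w, hw⟩
    -- x = x * y * w, so IsUnit (y * w), hence y right-invertible, hence unit
    have h1 : x * (y * w) = x := by rw [← mul_assoc, ← hw]
    have hyw : IsUnit (y * w) := by
      by_contra hn
      exact (huc x (y * w) hn).1 h1
    obtain ⟨u, hu⟩ := hyw
    have : y * (w * (↑u⁻¹ : H)) = 1 := by rw [← mul_assoc, ← hu]; simp
    exact hy (dedekind huc this)
  · rintro ⟨hna, hatom⟩
    refine ⟨fun h => hna ((ldvdUnit_iff huc a).mp h), ?_⟩
    rintro ⟨b, hb, ⟨v, hv⟩, hnab⟩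
    have hbn : ¬ IsUnit b := fun h => hb ((ldvdUnit_iff huc b).mpr h)
    have hvu : IsUnit v := by
      by_contra hn
      exact hatom b v hbn hn hv
    apply hnab
    refine ⟨↑hvu.unit⁻¹, ?_⟩
    rw [hv]
    simp [mul_assoc]

end
end

section
/- Let H be an acyclic monoid. Then every ∣_H-irreducible of H is an atom of H. -/
section

variable {H : Type*} [Monoid H]

theorem stmt_10
    (hac : ∀ u v x : H, ¬ IsUnit u ∨ ¬ IsUnit v → u * x * v ≠ x) (a : H)
    (ha : ¬ IsUnit a ∧ ∀ x y : H, ¬ IsUnit x → ¬ IsUnit y →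
      (DvdH x a ∧ ¬ DvdH a x) → (DvdH y a ∧ ¬ DvdH a y) → a ≠ x * y) :
    ¬ IsUnit a ∧ ∀ x y : H, ¬ IsUnit x → ¬ IsUnit y → a ≠ x * y := by
  -- Helper: from b * c = 1, both b and c are units (Dedekind-finiteness from acyclicity)
  have key : ∀ b c : H, b * c = 1 → IsUnit b ∧ IsUnit c := by
    intro b c hbc
    have h1 : (1 : H) * b * (c * b) = b := by
      rw [one_mul, ← mul_assoc, hbc, one_mul]
    have hcb : IsUnit (c * b) := by
      by_contra hcb
      exact hac 1 (c * b) b (Or.inr hcb) h1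
    obtain ⟨t, ht⟩ := hcb
    -- left inverse of b : ↑t⁻¹ * c
    have hl : (↑t⁻¹ * c) * b = 1 := by
      rw [mul_assoc, ← ht]; exact t.inv_mul
    -- left inv = right inv
    have : (↑t⁻¹ * c : H) = c := by
      calc (↑t⁻¹ * c : H) = (↑t⁻¹ * c) * (b * c) := by rw [hbc, mul_one]
        _ = ((↑t⁻¹ * c) * b) * c := by simp only [mul_assoc]
        _ = c := by rw [hl, one_mul]
    rw [this] at hl
    exact ⟨⟨⟨b, c, hbc, hl⟩, rfl⟩, ⟨⟨c, b, hl, hbc⟩, rfl⟩⟩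
  refine ⟨ha.1, fun x y hx hy heq => ?_⟩
  refine ha.2 x y hx hy ⟨⟨1, y, by rw [one_mul, heq]⟩, ?_⟩
    ⟨⟨x, 1, by rw [mul_one, heq]⟩, ?_⟩ heq
  · rintro ⟨u, v, huv⟩
    have h : u * x * (y * v) = x := by
      rw [← mul_assoc, mul_assoc u x y, ← heq, ← huv]
    have hyv : ¬ IsUnit (y * v) := by
      intro hu
      obtain ⟨s, hs⟩ := hu
      have : y * (v * ↑s⁻¹) = 1 := by
        rw [← mul_assoc, ← hs]; exact s.mul_inv
      exact hy (key _ _ this).1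
    exact hac u (y * v) x (Or.inr hyv) h
  · rintro ⟨u, v, huv⟩
    have h : (u * x) * y * v = y := by
      rw [mul_assoc u x y, ← heq, ← huv]
    have hux : ¬ IsUnit (u * x) := by
      intro hu
      obtain ⟨s, hs⟩ := hu
      have : (↑s⁻¹ * u) * x = 1 := by
        rw [mul_assoc, ← hs]; exact s.inv_mul
      exact hx (key _ _ this).2
    exact hac (u * x) v y (Or.inl hux) h

end
end

section
/- Let H be a monoid that is unit-cancellative and such that both the left-divisibility preorder ⊢_H and the right-divisibility preorder ⊣_H are artinian. Then H is acyclic, i.e., uxv ≠ x for all u, v, x ∈ H with u ∉ H^× or v ∉ H^×. -/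
section

variable {H : Type*} [Monoid H]

/-- Right divisibility: `x ⊣_H y` iff `y ∈ Hx`. -/
def RDvd [Monoid H] (x y : H) : Prop := ∃ u : H, y = u * x

private lemma aux_unit {a b : H} (h1 : IsUnit (a * b)) (h2 : IsUnit (b * a)) :
    IsUnit a := by
  obtain ⟨e, he⟩ := h1
  obtain ⟨e', he'⟩ := h2
  have hr : a * (b * ↑e⁻¹) = 1 := by
    rw [← mul_assoc, ← he]; exact e.mul_inv
  have hl : (↑e'⁻¹ * b) * a = 1 := by
    rw [mul_assoc, ← he']; exact e'.inv_mul
  have hlr : (↑e'⁻¹ * b : H) = b * ↑e⁻¹ := by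
    calc (↑e'⁻¹ * b : H) = (↑e'⁻¹ * b) * (a * (b * ↑e⁻¹)) := by rw [hr, mul_one]
    _ = ((↑e'⁻¹ * b) * a) * (b * ↑e⁻¹) := by simp [mul_assoc]
    _ = b * ↑e⁻¹ := by rw [hl, one_mul]
  exact ⟨⟨a, b * ↑e⁻¹, hr, hlr ▸ hl⟩, rfl⟩

theorem stmt_11
    (huc : ∀ x y : H, ¬ IsUnit y → x * y ≠ x ∧ y * x ≠ x)
    (hl : ¬ ∃ f : ℕ → H, ∀ k, LDvd (f (k + 1)) (f k) ∧ ¬ LDvd (f k) (f (k + 1)))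
    (hr : ¬ ∃ f : ℕ → H, ∀ k, RDvd (f (k + 1)) (f k) ∧ ¬ RDvd (f k) (f (k + 1))) :
    ∀ u v x : H, ¬ IsUnit u ∨ ¬ IsUnit v → u * x * v ≠ x := by
  intro u v x h heq
  -- key cancellativity consequence: if z * y = z or y * z = z then y is a unit
  have cancel : ∀ z y : H, (z * y = z ∨ y * z = z) → IsUnit y := by
    intro z y hz
    by_contra hy
    rcases hz with hz | hz
    · exact (huc z y hy).1 hz
    · exact (huc z y hy).2 hz
  -- f k = u^k * x, decreasing for LDvd
  have hf : ∀ k : ℕ, (u ^ (k + 1) * x) * v = u ^ k * x := by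
    intro k
    rw [pow_succ, mul_assoc (u ^ k) u x, mul_assoc, heq]
  have hvu : IsUnit v := by
    by_contra hv
    apply hl
    refine ⟨fun k => u ^ k * x, fun k => ⟨⟨v, (hf k).symm⟩, ?_⟩⟩
    rintro ⟨w, hw⟩
    -- u^(k+1) x = u^k x * w,  u^k x = u^(k+1) x * v
    have h1 : (u ^ (k + 1) * x) * (v * w) = u ^ (k + 1) * x := by
      rw [← mul_assoc, hf k, ← hw]
    have h2 : (u ^ k * x) * (w * v) = u ^ k * x := by
      rw [← mul_assoc, ← hw, hf k]
    exact hv (aux_unit (cancel _ _ (Or.inl h1)) (cancel _ _ (Or.inl h2)))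
  -- g k = x * v^k, decreasing for RDvd
  have hg : ∀ k : ℕ, u * (x * v ^ (k + 1)) = x * v ^ k := by
    intro k
    rw [pow_succ', ← mul_assoc x v, ← mul_assoc, ← mul_assoc u x v, heq]
  have huu : IsUnit u := by
    by_contra hu
    apply hr
    refine ⟨fun k => x * v ^ k, fun k => ⟨⟨u, (hg k).symm⟩, ?_⟩⟩
    rintro ⟨t, ht⟩
    have h1 : (u * t) * (x * v ^ k) = x * v ^ k := by
      rw [mul_assoc, ← ht, hg k]
    have h2 : (t * u) * (x * v ^ (k + 1)) = x * v ^ (k + 1) := by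
      rw [mul_assoc, hg k, ← ht]
    exact hu (aux_unit (cancel _ _ (Or.inr h1)) (cancel _ _ (Or.inr h2)))
  rcases h with h | h
  · exact h huu
  · exact h hvu

end
end

section
/- Let H be a unit-cancellative monoid whose left-divisibility preorder ⊢_H and right-divisibility preorder ⊣_H are both artinian. Then the divisibility preorder ∣_H (x ∣_H y iff y ∈ HxH) is artinian. -/
section

variable {H : Type*} [Monoid H]

/-- In an artinian preorder, a descending chain is eventually equivalent. -/
lemma aux_eventually {α : Type*} (R : α → α → Prop)
    (hrefl : ∀ a, R a a) (htrans : ∀ a b c, R a b → R b c → R a c)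
    (hart : ¬ ∃ f : ℕ → α, ∀ k, R (f (k + 1)) (f k) ∧ ¬ R (f k) (f (k + 1)))
    (w : ℕ → α) (hw : ∀ k, R (w (k + 1)) (w k)) :
    ∃ N, ∀ k, N ≤ k → R (w k) (w (k + 1)) := by
  by_contra h
  push_neg at h
  have h' : ∀ N, ∃ k, N ≤ k ∧ ¬ R (w k) (w (k + 1)) := by
    intro N; obtain ⟨k, hk1, hk2⟩ := h N; exact ⟨k, hk1, hk2⟩
  choose g hg1 hg2 using h'
  have hchain : ∀ a b : ℕ, a ≤ b → R (w b) (w a) := by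
    intro a b hab
    induction b, hab using Nat.le_induction with
    | base => exact hrefl _
    | succ b hb ih => exact htrans _ _ _ (hw b) ih
  set j : ℕ → ℕ := fun n => Nat.rec (g 0) (fun _ prev => g (prev + 1)) n with hj
  have hjsucc : ∀ n, j (n + 1) = g (j n + 1) := fun n => rfl
  have hjlt : ∀ n, j n + 1 ≤ j (n + 1) := by
    intro n; rw [hjsucc]; exact hg1 _
  have hjbad : ∀ n, ¬ R (w (j n)) (w (j n + 1)) := by
    intro n
    cases n with
    | zero => exact hg2 0
    | succ m => rw [hjsucc]; exact hg2 _
  apply hart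
  refine ⟨fun n => w (j n), fun n => ⟨hchain _ _ (le_trans (Nat.le_succ _) (hjlt n)), ?_⟩⟩
  intro hR
  exact hjbad n (htrans _ _ _ hR (hchain _ _ (hjlt n)))

lemma aux_isUnit {a b : H} (h1 : IsUnit (a * b)) (h2 : IsUnit (b * a)) : IsUnit b := by
  obtain ⟨c, hc1, hc2⟩ := isUnit_iff_exists.1 h1
  obtain ⟨d, hd1, hd2⟩ := isUnit_iff_exists.1 h2
  refine isUnit_iff_exists.2 ⟨a * d, ?_, ?_⟩
  · rw [← mul_assoc]; exact hd1
  · have hca : (c * a) * b = 1 := by rw [mul_assoc]; exact hc2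
    have : a * d = c * a := by
      calc a * d = (c * a * b) * (a * d) := by rw [hca, one_mul]
        _ = (c * a) * (b * a * d) := by simp [mul_assoc]
        _ = c * a := by rw [hd1, mul_one]
    rw [this]; exact hca

theorem stmt_12
    (huc : ∀ x y : H, ¬ IsUnit y → x * y ≠ x ∧ y * x ≠ x)
    (hl : ¬ ∃ f : ℕ → H, ∀ k, LDvd (f (k + 1)) (f k) ∧ ¬ LDvd (f k) (f (k + 1)))
    (hr : ¬ ∃ f : ℕ → H, ∀ k, RDvd (f (k + 1)) (f k) ∧ ¬ RDvd (f k) (f (k + 1))) :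
    ¬ ∃ f : ℕ → H, ∀ k, (∃ u v : H, f k = u * f (k + 1) * v) ∧
      ¬ (∃ u v : H, f (k + 1) = u * f k * v) := by
  rintro ⟨f, hf⟩
  have h1 : ∀ k, ∃ u v : H, f k = u * f (k + 1) * v := fun k => (hf k).1
  choose u v huv using h1
  have hnd : ∀ k, ¬ (∃ u v : H, f (k + 1) = u * f k * v) := fun k => (hf k).2
  -- left chain: z k = U k * f k
  set U : ℕ → H := fun n => Nat.rec 1 (fun k Uk => Uk * u k) n with hU
  set z : ℕ → H := fun k => U k * f k with hzdef
  have hz : ∀ k, z k = z (k + 1) * v k := by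
    intro k
    show U k * f k = (U k * u k) * f (k + 1) * v k
    rw [huv k]; simp [mul_assoc]
  obtain ⟨N1, hN1⟩ := aux_eventually (fun x y : H => ∃ c : H, y = x * c)
    (fun a => ⟨1, (mul_one a).symm⟩)
    (fun a b c ⟨s, hs⟩ ⟨t, ht⟩ => ⟨s * t, by rw [ht, hs, mul_assoc]⟩)
    hl z (fun k => ⟨v k, hz k⟩)
  -- right chain: w k = f k * V k
  set V : ℕ → H := fun n => Nat.rec 1 (fun k Vk => v k * Vk) n with hV
  set w : ℕ → H := fun k => f k * V k with hwdef
  have hwd : ∀ k, w k = u k * w (k + 1) := by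
    intro k
    show f k * V k = u k * (f (k + 1) * (v k * V k))
    rw [huv k]; simp [mul_assoc]
  obtain ⟨N2, hN2⟩ := aux_eventually (fun x y : H => ∃ c : H, y = c * x)
    (fun a => ⟨1, (one_mul a).symm⟩)
    (fun a b c ⟨s, hs⟩ ⟨t, ht⟩ => ⟨t * s, by rw [ht, hs, mul_assoc]⟩)
    hr w (fun k => ⟨u k, hwd k⟩)
  set K := max N1 N2 with hK
  -- v K is a unit
  obtain ⟨s, hs⟩ := hN1 K (le_max_left _ _)
  have hsv : IsUnit (s * v K) := by
    by_contra hns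
    have := (huc (z K) (s * v K) hns).1
    apply this
    rw [← mul_assoc, ← hs, ← hz]
  have hvs : IsUnit (v K * s) := by
    by_contra hns
    have := (huc (z (K + 1)) (v K * s) hns).1
    apply this
    rw [← mul_assoc, ← hz, ← hs]
  have hvK : IsUnit (v K) := aux_isUnit hsv hvs
  -- u K is a unit
  obtain ⟨t, ht⟩ := hN2 K (le_max_right _ _)
  have htu : IsUnit (t * u K) := by
    by_contra hns
    have := (huc (w (K + 1)) (t * u K) hns).2
    apply this
    rw [mul_assoc, ← hwd, ← ht]
  have hut : IsUnit (u K * t) := by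
    by_contra hns
    have := (huc (w K) (u K * t) hns).2
    apply this
    rw [mul_assoc, ← ht, ← hwd]
  have huK : IsUnit (u K) := aux_isUnit htu hut
  -- contradiction
  obtain ⟨a, ha1, ha2⟩ := isUnit_iff_exists.1 huK
  obtain ⟨b, hb1, hb2⟩ := isUnit_iff_exists.1 hvK
  apply hnd K
  refine ⟨a, b, ?_⟩
  rw [huv K]
  calc f (K + 1) = (a * u K) * f (K + 1) * (v K * b) := by rw [ha2, hb1]; simp
    _ = a * (u K * f (K + 1) * v K) * b := by simp [mul_assoc]

end
end

section
/- Let H be an acyclic monoid whose divisibility preorder ∣_H is artinian. Then the left-divisibility preorder ⊢_H is artinian, and by symmetry so is ⊣_H. -/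
section

variable {H : Type*} [Monoid H]

/-- A preorder is artinian if every non-increasing sequence is eventually equivalent. -/
def ArtinianRel (r : H → H → Prop) : Prop :=
  ∀ f : ℕ → H, (∀ k, r (f (k + 1)) (f k)) → ∃ k', ∀ k ≥ k', r (f k) (f (k + 1))

theorem stmt_13
    (hac : ∀ u v x : H, ¬ IsUnit u ∨ ¬ IsUnit v → u * x * v ≠ x)
    (hart : ArtinianRel (DvdH : H → H → Prop)) :
    ArtinianRel (LDvd : H → H → Prop) ∧ ArtinianRel (RDvd : H → H → Prop) := by
  constructor
  · intro f hf
    obtain ⟨k', hk'⟩ := hart f (fun k => by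
      obtain ⟨v, hv⟩ := hf k
      exact ⟨1, v, by simp [hv]⟩)
    refine ⟨k', fun k hk => ?_⟩
    obtain ⟨w, hw⟩ := hf k
    obtain ⟨u, v, huv⟩ := hk' k hk
    have heq : u * f (k+1) * (w * v) = f (k+1) := by
      conv_rhs => rw [huv, hw]
      simp [mul_assoc]
    have hunits : IsUnit u ∧ IsUnit (w * v) := by
      by_contra h
      rw [not_and_or] at h
      exact hac u (w*v) (f (k+1)) h heq
    obtain ⟨-, hwv⟩ := hunits
    refine ⟨v * ↑hwv.unit⁻¹, ?_⟩
    have h1 : w * (v * ↑hwv.unit⁻¹) = 1 := by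
      rw [← mul_assoc]
      exact hwv.mul_val_inv
    rw [hw, mul_assoc, h1, mul_one]
  · intro f hf
    obtain ⟨k', hk'⟩ := hart f (fun k => by
      obtain ⟨u, hu⟩ := hf k
      exact ⟨u, 1, by simp [hu]⟩)
    refine ⟨k', fun k hk => ?_⟩
    obtain ⟨w, hw⟩ := hf k
    obtain ⟨u, v, huv⟩ := hk' k hk
    have heq : (u * w) * f (k+1) * v = f (k+1) := by
      conv_rhs => rw [huv, hw]
      simp [mul_assoc]
    have hunits : IsUnit (u * w) ∧ IsUnit v := by
      by_contra h
      rw [not_and_or] at h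
      exact hac (u*w) v (f (k+1)) h heq
    obtain ⟨huw, -⟩ := hunits
    refine ⟨↑huw.unit⁻¹ * u, ?_⟩
    have h1 : (↑huw.unit⁻¹ * u) * w = 1 := by
      rw [mul_assoc]
      exact huw.val_inv_mul
    rw [hw, ← mul_assoc, h1, one_mul]


end
end

section
/- Let H be a monoid that is acyclic and satisfies the ACCP (no strictly ascending chain of principal two-sided ideals HaH). Then every non-unit of H factors as a non-empty finite product of atoms of H. -/
theorem stmt_14 {H : Type*} [Monoid H]
    (hac : ∀ u v x : H, ¬ IsUnit u ∨ ¬ IsUnit v → u * x * v ≠ x)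
    (haccp : ¬ ∃ f : ℕ → H, ∀ k,
      {z : H | ∃ u v : H, z = u * f k * v} ⊂ {z : H | ∃ u v : H, z = u * f (k + 1) * v})
    (a : H) (ha : ¬ IsUnit a) :
    ∃ l : List H, l ≠ [] ∧ l.prod = a ∧
      ∀ b ∈ l, ¬ IsUnit b ∧ ∀ x y : H, ¬ IsUnit x → ¬ IsUnit y → b ≠ x * y := by
  by_contra hno
  -- units factor: if x*y is a unit then so are x and y
  have hun : ∀ x y : H, IsUnit (x * y) → IsUnit x ∧ IsUnit y := by
    intro x y h
    obtain ⟨w, hw⟩ := h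
    constructor
    · by_contra hx
      exact hac x (y * ↑w⁻¹) 1 (Or.inl hx)
        (by rw [mul_one, ← mul_assoc, ← hw, Units.mul_inv])
    · by_contra hy
      exact hac (↑w⁻¹ * x) y 1 (Or.inr hy)
        (by rw [mul_one, mul_assoc, ← hw, Units.inv_mul])
  set Bad : H → Prop := fun b => ¬ IsUnit b ∧ ¬ ∃ l : List H, l ≠ [] ∧ l.prod = b ∧
      ∀ c ∈ l, ¬ IsUnit c ∧ ∀ x y : H, ¬ IsUnit x → ¬ IsUnit y → c ≠ x * y with hBad
  have step : ∀ b : H, Bad b → ∃ c : H, Bad c ∧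
      {z : H | ∃ u v : H, z = u * b * v} ⊂ {z : H | ∃ u v : H, z = u * c * v} := by
    rintro b ⟨hb, hbl⟩
    have hnat : ¬ ∀ x y : H, ¬IsUnit x → ¬IsUnit y → b ≠ x * y := by
      intro hat
      exact hbl ⟨[b], by simp, by simp, by simpa using ⟨hb, hat⟩⟩
    push_neg at hnat
    obtain ⟨x, y, hx, hy, hbxy⟩ := hnat
    -- subset facts
    have subx : {z : H | ∃ u v : H, z = u * b * v} ⊆ {z : H | ∃ u v : H, z = u * x * v} := by
      rintro z ⟨u, v, hz⟩
      exact ⟨u, y * v, by simp [hz, hbxy, mul_assoc]⟩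
    have suby : {z : H | ∃ u v : H, z = u * b * v} ⊆ {z : H | ∃ u v : H, z = u * y * v} := by
      rintro z ⟨u, v, hz⟩
      exact ⟨u * x, v, by rw [hz, hbxy, ← mul_assoc]⟩
    have nmx : x ∉ {z : H | ∃ u v : H, z = u * b * v} := by
      rintro ⟨u, v, hxe⟩
      refine hac u (y * v) x (Or.inr fun h => hy (hun y v h).1) ?_
      rw [hbxy] at hxe
      simpa [mul_assoc] using hxe.symm
    have nmy : y ∉ {z : H | ∃ u v : H, z = u * b * v} := by
      rintro ⟨u, v, hye⟩
      refine hac (u * x) v y (Or.inl fun h => hx (hun u x h).2) ?_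
      rw [hbxy] at hye
      simpa [mul_assoc] using hye.symm
    by_cases hxf : ∃ l : List H, l ≠ [] ∧ l.prod = x ∧
        ∀ c ∈ l, ¬ IsUnit c ∧ ∀ x y : H, ¬ IsUnit x → ¬ IsUnit y → c ≠ x * y
    · by_cases hyf : ∃ l : List H, l ≠ [] ∧ l.prod = y ∧
          ∀ c ∈ l, ¬ IsUnit c ∧ ∀ x y : H, ¬ IsUnit x → ¬ IsUnit y → c ≠ x * y
      · obtain ⟨l1, h1ne, h1p, h1a⟩ := hxf
        obtain ⟨l2, h2ne, h2p, h2a⟩ := hyf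
        exact absurd ⟨l1 ++ l2, by simp [h1ne], by simp [h1p, h2p, hbxy],
          fun c hc => (List.mem_append.mp hc).elim (h1a c) (h2a c)⟩ hbl
      · exact ⟨y, ⟨hy, hyf⟩, suby, fun h => nmy (h ⟨1, 1, by simp⟩)⟩
    · exact ⟨x, ⟨hx, hxf⟩, subx, fun h => nmx (h ⟨1, 1, by simp⟩)⟩
  have step' : ∀ b : H, ∃ c : H, Bad b → Bad c ∧
      {z : H | ∃ u v : H, z = u * b * v} ⊂ {z : H | ∃ u v : H, z = u * c * v} := by
    intro b
    by_cases hb : Bad b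
    · obtain ⟨c, hc⟩ := step b hb
      exact ⟨c, fun _ => hc⟩
    · exact ⟨b, fun h => absurd h hb⟩
  choose g hg using step'
  have hbad : ∀ k : ℕ, Bad (g^[k] a) := by
    intro k
    induction k with
    | zero => exact ⟨ha, hno⟩
    | succ n ih =>
      rw [Function.iterate_succ_apply']
      exact (hg _ ih).1
  exact haccp ⟨fun k => g^[k] a, fun k => by
    have h2 := (hg _ (hbad k)).2
    rw [show g (g^[k] a) = g^[k+1] a from (Function.iterate_succ_apply' g k a).symm] at h2
    exact h2⟩
end

section
/- Let H be a monoid with no proper idempotent (i.e., x² = x implies x = 1_H). Then H is Dedekind-finite, and for every non-unit x of H the set {x, x², x³, …} is infinite. -/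
theorem stmt_17 {H : Type*} [Monoid H]
    (hid : ∀ x : H, x * x = x → x = 1) :
    (∀ x y : H, x * y = 1 → y * x = 1) ∧
    ∀ x : H, ¬ IsUnit x → {y : H | ∃ n : ℕ, 1 ≤ n ∧ y = x ^ n}.Infinite := by
  constructor
  · intro x y h
    apply hid
    calc (y * x) * (y * x) = y * ((x * y) * x) := by simp [mul_assoc]
    _ = y * x := by rw [h, one_mul]
  · intro x hx hfin
    apply hx
    -- powers repeat
    have hmap : ∀ n : ℕ, x ^ (n + 1) ∈ {y : H | ∃ n : ℕ, 1 ≤ n ∧ y = x ^ n} := by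
      intro n; exact ⟨n + 1, Nat.le_add_left 1 n, rfl⟩
    have : ¬ Function.Injective (fun n : ℕ => x ^ (n + 1)) := by
      intro hinj
      exact Set.infinite_of_injective_forall_mem hinj hmap hfin
    rw [Function.not_injective_iff] at this
    obtain ⟨a, b, hab, hne⟩ := this
    wlog hlt : a < b generalizing a b
    · exact this b a hab.symm hne.symm (by omega)
    have hab' : x ^ (a + 1) = x ^ (b + 1) := hab
    set m := a + 1 with hm
    set k := b - a with hk
    have hm1 : 1 ≤ m := by omega
    have hk1 : 1 ≤ k := by omega
    have hstep : x ^ m = x ^ (m + k) := by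
      rw [hab']; congr 1; omega
    -- x^t = x^(t+k) for t ≥ m
    have hshift : ∀ t, m ≤ t → x ^ t = x ^ (t + k) := by
      intro t ht
      have : x ^ t = x ^ (t - m) * x ^ m := by rw [← pow_add]; congr 1; omega
      rw [this, hstep, ← pow_add]
      congr 1; omega
    have hjump : ∀ j t, m ≤ t → x ^ t = x ^ (t + j * k) := by
      intro j
      induction j with
      | zero => simp
      | succ j ih =>
        intro t ht
        rw [ih t ht, hshift (t + j * k) (by omega)]
        congr 1; ring
    have he : x ^ (m * k) * x ^ (m * k) = x ^ (m * k) := by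
      rw [← pow_add]
      exact (hjump m (m * k) (by nlinarith)).symm
    have h1 : x ^ (m * k) = 1 := hid _ he
    have hmk : 1 ≤ m * k := by nlinarith
    have h2 : x * x ^ (m * k - 1) = 1 := by
      rw [← pow_succ']
      have : m * k - 1 + 1 = m * k := by omega
      rw [this, h1]
    have h3 : x ^ (m * k - 1) * x = 1 := by
      rw [← pow_succ]
      have : m * k - 1 + 1 = m * k := by omega
      rw [this, h1]
    exact ⟨⟨x, x ^ (m * k - 1), h2, h3⟩, rfl⟩
end

section
/- Let H be a monoid and let P = P_{fin,1}(H) be the reduced power monoid of H (finite subsets of H containing 1_H, under setwise multiplication). Then P is reduced (its only unit is {1_H}) and the divisibility preorder ∣_P (X ∣_P Y iff Y ∈ P·X·P) is artinian. -/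
open scoped Pointwise

section

variable {H : Type*} [Monoid H] [DecidableEq H]

/-- Divisibility in the reduced power monoid `P_{fin,1}(H)`:
`X ∣ Y` iff `Y = U * X * V` for some finite sets `U, V` containing `1`. -/
def PDvd [Monoid H] [DecidableEq H] (X Y : Finset H) : Prop :=
  ∃ U V : Finset H, (1 : H) ∈ U ∧ (1 : H) ∈ V ∧ Y = U * X * V

lemma pdvd_subset {X Y : Finset H} (h : PDvd X Y) : X ⊆ Y := by
  obtain ⟨U, V, hU, hV, rfl⟩ := h
  intro x hx
  simpa using Finset.mul_mem_mul (Finset.mul_mem_mul hU hx) hV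

theorem stmt_18 :
    (∀ X Y : Finset H, (1 : H) ∈ X → (1 : H) ∈ Y → X * Y = {1} →
      X = {1} ∧ Y = {1}) ∧
    ¬ ∃ f : ℕ → Finset H, (∀ k, (1 : H) ∈ f k) ∧
      ∀ k, PDvd (f (k + 1)) (f k) ∧ ¬ PDvd (f k) (f (k + 1)) := by
  constructor
  · intro X Y hX hY hXY
    constructor
    · have hsub : X ⊆ X * Y := fun x hx => by
        simpa using Finset.mul_mem_mul hx hY
      rw [hXY] at hsub
      exact Finset.Subset.antisymm hsub (by simpa using hX)
    · have hsub : Y ⊆ X * Y := fun y hy => by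
        simpa using Finset.mul_mem_mul hX hy
      rw [hXY] at hsub
      exact Finset.Subset.antisymm hsub (by simpa using hY)
  · rintro ⟨f, hmem, hchain⟩
    have hsub : ∀ k, f (k + 1) ⊆ f k := fun k => pdvd_subset (hchain k).1
    have hne : ∀ k, f (k + 1) ≠ f k := by
      intro k he
      exact (hchain k).2 ⟨{1}, {1}, by simp, by simp, by rw [he]; ext x; simp [Finset.mul_singleton, Finset.singleton_mul]⟩
    have hlt : ∀ k, (f (k + 1)).card < (f k).card := fun k =>
      Finset.card_lt_card (lt_of_le_of_ne (hsub k) (hne k))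
    have key : ∀ n, (f n).card + n ≤ (f 0).card := by
      intro n
      induction n with
      | zero => simp
      | succ n ih => have := hlt n; omega
    have := key ((f 0).card + 1)
    omega

end
end

section
/- Let H be a monoid such that 1_H ≠ x² ≠ x for every x ∈ H with x ≠ 1_H. Then every element of the reduced power monoid P_{fin,1}(H) factors as a (possibly empty) finite product of atoms of P_{fin,1}(H). Conversely, if every element of P_{fin,1}(H) factors as a product of atoms, then 1_H ≠ x² ≠ x for every x ∈ H \ {1_H}. -/
open scoped Pointwise

section

variable {H : Type*} [Monoid H] [DecidableEq H]

/-- An atom of the reduced power monoid `P_{fin,1}(H)`: a set `A ≠ {1}` (containing `1`)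
that is not a product of two sets (containing `1`) both different from `{1}`. -/
def PAtom [Monoid H] [DecidableEq H] (A : Finset H) : Prop :=
  (1 : H) ∈ A ∧ A ≠ {1} ∧ ∀ X Y : Finset H, (1 : H) ∈ X → (1 : H) ∈ Y →
    X ≠ {1} → Y ≠ {1} → A ≠ X * Y

private lemma exists_ne_one_mem {A : Finset H} (h1 : (1 : H) ∈ A) (hne : A ≠ {1}) :
    ∃ a ∈ A, a ≠ 1 := by
  by_contra h
  push_neg at h
  exact hne (Finset.ext fun a => ⟨fun ha => by simp [h a ha], fun ha => by
    simp at ha; subst ha; exact h1⟩)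

private lemma eq_pair_of_subset {x : H} {A : Finset H} (hsub : A ⊆ ({1, x} : Finset H))
    (h1 : (1 : H) ∈ A) (hne : A ≠ {1}) : A = {1, x} := by
  obtain ⟨a, haA, ha1⟩ := exists_ne_one_mem h1 hne
  have hax : a = x := by
    have := hsub haA
    simp at this
    tauto
  subst hax
  apply Finset.Subset.antisymm hsub
  intro b hb
  simp at hb
  rcases hb with rfl | rfl
  · exact h1
  · exact haA

private lemma pair_atom (hH : ∀ x : H, x ≠ 1 → x * x ≠ 1 ∧ x * x ≠ x)
    {x : H} (hx : x ≠ 1) : PAtom ({1, x} : Finset H) := by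
  refine ⟨by simp, ?_, ?_⟩
  · intro h
    have : x ∈ ({1} : Finset H) := h ▸ (by simp : x ∈ ({1, x} : Finset H))
    simp at this
    exact hx this
  · intro U V hU hV hU1 hV1 hEq
    have hUsub : U ⊆ ({1, x} : Finset H) := hEq ▸ Finset.subset_mul_left U hV
    have hVsub : V ⊆ ({1, x} : Finset H) := hEq ▸ Finset.subset_mul_right V hU
    have hUeq := eq_pair_of_subset hUsub hU hU1
    have hVeq := eq_pair_of_subset hVsub hV hV1
    have hxx : x * x ∈ ({1, x} : Finset H) := by
      rw [hEq, hUeq, hVeq]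
      exact Finset.mul_mem_mul (by simp) (by simp)
    simp at hxx
    rcases hxx with h | h
    · exact (hH x hx).1 h
    · exact (hH x hx).2 h

private lemma one_mem_list_prod {l : List (Finset H)} (h : ∀ A ∈ l, (1 : H) ∈ A) :
    (1 : H) ∈ l.prod := by
  induction l with
  | nil => simp [Finset.one_mem_one]
  | cons B t ih =>
    rw [List.prod_cons]
    simpa using Finset.mul_mem_mul (h B (by simp)) (ih fun A hA => h A (by simp [hA]))

private lemma mem_subset_list_prod {l : List (Finset H)} (h : ∀ A ∈ l, (1 : H) ∈ A) :
    ∀ A ∈ l, A ⊆ l.prod := by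
  induction l with
  | nil => simp
  | cons B t ih =>
    intro A hA
    rw [List.prod_cons]
    rcases List.mem_cons.mp hA with rfl | hA'
    · exact Finset.subset_mul_left _ (one_mem_list_prod fun C hC => h C (by simp [hC]))
    · exact (ih (fun C hC => h C (by simp [hC])) A hA').trans
        (Finset.subset_mul_right _ (h B (by simp)))

private lemma forward_aux (hH : ∀ x : H, x ≠ 1 → x * x ≠ 1 ∧ x * x ≠ x) :
    ∀ n (X : Finset H), X.card ≤ n → (1 : H) ∈ X →
      ∃ l : List (Finset H), (∀ A ∈ l, PAtom A) ∧ l.prod = X := by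
  intro n
  induction n with
  | zero =>
    intro X hc h1
    exact absurd (Finset.card_pos.mpr ⟨1, h1⟩) (by omega)
  | succ n ih =>
    intro X hc h1
    by_cases hX1 : X = {1}
    · exact ⟨[], by simp, by rw [List.prod_nil, hX1]; rfl⟩
    by_cases hA : PAtom X
    · exact ⟨[X], by simpa using hA, by simp⟩
    · have hnot : ¬ (∀ U V : Finset H, (1 : H) ∈ U → (1 : H) ∈ V →
          U ≠ {1} → V ≠ {1} → X ≠ U * V) := fun hc' => hA ⟨h1, hX1, hc'⟩
      push_neg at hnot
      obtain ⟨Y, Z, h1Y, h1Z, hY1, hZ1, hXYZ⟩ := hnot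
      have hYsub : Y ⊆ X := hXYZ ▸ Finset.subset_mul_left Y h1Z
      have hZsub : Z ⊆ X := hXYZ ▸ Finset.subset_mul_right Z h1Y
      by_cases hYX : Y = X
      · -- X = X * Z : take z ∈ Z, z ≠ 1; X = (X.erase (z*z)) * {1, z}
        subst hYX
        obtain ⟨z, hzZ, hz1⟩ := exists_ne_one_mem h1Z hZ1
        obtain ⟨hzz1, hzzz⟩ := hH z hz1
        have hzX : z ∈ Y := hZsub hzZ
        have hzzX : z * z ∈ Y := hXYZ ▸ Finset.mul_mem_mul hzX hzZ
        set X' := Y.erase (z * z) with hX'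
        have h1X' : (1 : H) ∈ X' := Finset.mem_erase.mpr ⟨fun h => hzz1 h.symm, h1⟩
        have hcard : X'.card ≤ n := by
          have h2 : X'.card = Y.card - 1 := by rw [hX']; exact Finset.card_erase_of_mem hzzX
          omega
        obtain ⟨l, hl, hlprod⟩ := ih X' hcard h1X'
        refine ⟨l ++ [{1, z}], ?_, ?_⟩
        · intro A hA
          rcases List.mem_append.mp hA with h | h
          · exact hl A h
          · simp at h
            subst h
            exact pair_atom hH hz1
        · rw [List.prod_append, List.prod_cons, List.prod_nil, mul_one, hlprod]
          apply Finset.Subset.antisymm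
          · refine (Finset.mul_subset_mul (Finset.erase_subset _ _) ?_).trans
              (le_of_eq hXYZ.symm)
            intro a ha
            simp at ha
            rcases ha with rfl | rfl
            · exact h1Z
            · exact hzZ
          · intro a ha
            by_cases haz : a = z * z
            · subst haz
              exact Finset.mul_mem_mul
                (Finset.mem_erase.mpr ⟨fun h => hzzz h.symm, hzX⟩) (by simp)
            · have : a ∈ X' := Finset.mem_erase.mpr ⟨haz, ha⟩
              simpa using Finset.mul_mem_mul this (show (1:H) ∈ ({1,z} : Finset H) by simp)
      by_cases hZX : Z = X
      · -- X = Y * X : take y ∈ Y, y ≠ 1; X = {1, y} * (X.erase (y*y))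
        subst hZX
        obtain ⟨y, hyY, hy1⟩ := exists_ne_one_mem h1Y hY1
        obtain ⟨hyy1, hyyy⟩ := hH y hy1
        have hyX : y ∈ Z := hYsub hyY
        have hyyX : y * y ∈ Z := hXYZ ▸ Finset.mul_mem_mul hyY hyX
        set X' := Z.erase (y * y) with hX'
        have h1X' : (1 : H) ∈ X' := Finset.mem_erase.mpr ⟨fun h => hyy1 h.symm, h1⟩
        have hcard : X'.card ≤ n := by
          have h2 : X'.card = Z.card - 1 := by rw [hX']; exact Finset.card_erase_of_mem hyyX
          omega
        obtain ⟨l, hl, hlprod⟩ := ih X' hcard h1X'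
        refine ⟨{1, y} :: l, ?_, ?_⟩
        · intro A hA
          rcases List.mem_cons.mp hA with rfl | h
          · exact pair_atom hH hy1
          · exact hl A h
        · rw [List.prod_cons, hlprod]
          apply Finset.Subset.antisymm
          · refine (Finset.mul_subset_mul ?_ (Finset.erase_subset _ _)).trans
              (le_of_eq hXYZ.symm)
            intro a ha
            simp at ha
            rcases ha with rfl | rfl
            · exact h1Y
            · exact hyY
          · intro a ha
            by_cases hay : a = y * y
            · subst hay
              exact Finset.mul_mem_mul (by simp)
                (Finset.mem_erase.mpr ⟨fun h => hyyy h.symm, hyX⟩)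
            · have : a ∈ X' := Finset.mem_erase.mpr ⟨hay, ha⟩
              simpa using Finset.mul_mem_mul (show (1:H) ∈ ({1,y} : Finset H) by simp) this
      · -- both proper
        have hYc : Y.card ≤ n := by
          have := Finset.card_lt_card (Finset.ssubset_iff_subset_ne.mpr ⟨hYsub, hYX⟩)
          omega
        have hZc : Z.card ≤ n := by
          have := Finset.card_lt_card (Finset.ssubset_iff_subset_ne.mpr ⟨hZsub, hZX⟩)
          omega
        obtain ⟨lY, hlY, hlYp⟩ := ih Y hYc h1Y
        obtain ⟨lZ, hlZ, hlZp⟩ := ih Z hZc h1Z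
        refine ⟨lY ++ lZ, ?_, ?_⟩
        · intro A hA
          rcases List.mem_append.mp hA with h | h
          · exact hlY A h
          · exact hlZ A h
        · rw [List.prod_append, hlYp, hlZp, hXYZ]

theorem stmt_19 :
    (∀ x : H, x ≠ 1 → x * x ≠ 1 ∧ x * x ≠ x) ↔
    (∀ X : Finset H, (1 : H) ∈ X →
      ∃ l : List (Finset H), (∀ A ∈ l, PAtom A) ∧ l.prod = X) := by
  constructor
  · intro hH X h1
    exact forward_aux hH X.card X le_rfl h1
  · intro hAtomic x hx
    constructor <;> intro hxx <;> {
      obtain ⟨l, hl, hlprod⟩ := hAtomic ({1, x} : Finset H) (by simp)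
      have hlne : l ≠ [] := by
        intro h
        rw [h, List.prod_nil] at hlprod
        have : x ∈ (1 : Finset H) := by rw [hlprod]; simp
        rw [Finset.mem_one] at this
        exact hx this
      obtain ⟨A, hAl⟩ := List.exists_mem_of_ne_nil l hlne
      have hAatom := hl A hAl
      have hAsub : A ⊆ ({1, x} : Finset H) :=
        hlprod ▸ mem_subset_list_prod (fun C hC => (hl C hC).1) A hAl
      have hAeq : A = ({1, x} : Finset H) := eq_pair_of_subset hAsub hAatom.1 hAatom.2.1
      have hne : ({1, x} : Finset H) ≠ {1} := by
        intro h
        have : x ∈ ({1} : Finset H) := h ▸ (by simp : x ∈ ({1,x} : Finset H))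
        simp at this
        exact hx this
      apply hAatom.2.2 {1, x} {1, x} (by simp) (by simp) hne hne
      rw [hAeq]
      apply Finset.Subset.antisymm
      · intro a ha
        simpa using Finset.mul_mem_mul ha (show (1:H) ∈ ({1,x}:Finset H) by simp)
      · intro a ha
        rw [Finset.mem_mul] at ha
        obtain ⟨u, hu, v, hv, rfl⟩ := ha
        simp at hu hv
        rcases hu with rfl | rfl <;> rcases hv with rfl | rfl <;> simp [hxx]
    }

end
end
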